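/- The probabilistic frame potential equals the sum of squares of the eigenvalues of the frame operator: for μ a probability measure on ℝ^N with finite second moment, ∬ ⟨x,y⟩² dμ(x) dμ(y) = Σ_{k=1}^N λ_k², where λ_1,…,λ_N are the eigenvalues of S_μ (equivalently, PFP(μ) equals the squared Frobenius norm of the second-moment matrix of μ). -/

import Mathlib

open MeasureTheory
open scoped RealInnerProductSpace

/-!
Expanding `⟪x, y⟫ ^ 2 = ∑ i j, x i x j y i y j` and integrating in `y` and then in `x` turns the
potential into `∑ i j, S i j ^ 2`, the squared Frobenius norm of the second-moment matrix `S`. For a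
symmetric `S` this is `tr (S * S)`, which the spectral theorem identifies with `∑ k, λ_k ^ 2`.
-/

namespace Matrix

variable {n : Type*} [Fintype n]

lemma IsHermitian.trace_mul_self_eq_sum_eigenvalues_sq [DecidableEq n] {𝕜 : Type*} [RCLike 𝕜]
    {A : Matrix n n 𝕜} (hA : A.IsHermitian) :
    (A * A).trace = ∑ k, (hA.eigenvalues k : 𝕜) ^ 2 := by
  conv_lhs => rw [hA.spectral_theorem, ← map_mul, Unitary.conjStarAlgAut_apply, trace_mul_cycle,
    Unitary.coe_star_mul_self, one_mul, diagonal_mul_diagonal, trace_diagonal]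
  simp [sq]

lemma IsHermitian.trace_mul_self_eq_sum_sq {A : Matrix n n ℝ} (hA : A.IsHermitian) :
    (A * A).trace = ∑ i, ∑ j, A i j ^ 2 := by
  refine Finset.sum_congr rfl fun i _ => Finset.sum_congr rfl fun j _ => ?_
  simpa [sq] using congrArg (A i j * ·) (hA.apply i j)

lemma IsHermitian.sum_eigenvalues_sq_eq_sum_sq [DecidableEq n] {A : Matrix n n ℝ}
    (hA : A.IsHermitian) :
    ∑ k, hA.eigenvalues k ^ 2 = ∑ i, ∑ j, A i j ^ 2 := by
  simpa using hA.trace_mul_self_eq_sum_eigenvalues_sq.symm.trans hA.trace_mul_self_eq_sum_sq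

end Matrix

section Moments

variable {ι : Type*} [Fintype ι]

lemma inner_sq_eq_sum_sum (x y : EuclideanSpace ℝ ι) :
    ⟪x, y⟫ ^ 2 = ∑ i, ∑ j, x i * x j * (y i * y j) := by
  simp only [PiLp.inner_apply, RCLike.inner_apply, conj_trivial, sq, Finset.sum_mul_sum]
  exact Finset.sum_congr rfl fun i _ => Finset.sum_congr rfl fun j _ => by ring

variable {μ : Measure (EuclideanSpace ℝ ι)}
  (hmom : Integrable (fun y : EuclideanSpace ℝ ι => ‖y‖ ^ 2) μ)
include hmom

lemma integrable_apply_mul_apply (i j : ι) :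
    Integrable (fun y : EuclideanSpace ℝ ι => y i * y j) μ := by
  refine hmom.mono (by fun_prop) (.of_forall fun y => ?_)
  rw [norm_mul, norm_pow, norm_norm, sq]
  exact mul_le_mul (PiLp.norm_apply_le y i) (PiLp.norm_apply_le y j) (norm_nonneg _)
    (norm_nonneg _)

lemma integral_inner_sq (x : EuclideanSpace ℝ ι) :
    ∫ y, ⟪x, y⟫ ^ 2 ∂μ = ∑ i, ∑ j, x i * x j * ∫ z, z i * z j ∂μ := by
  simp only [inner_sq_eq_sum_sum]
  rw [integral_finsetSum _ fun i _ =>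
    integrable_finsetSum _ fun j _ => (integrable_apply_mul_apply hmom i j).const_mul _]
  refine Finset.sum_congr rfl fun i _ => ?_
  rw [integral_finsetSum _ fun j _ => (integrable_apply_mul_apply hmom i j).const_mul _]
  exact Finset.sum_congr rfl fun j _ => integral_const_mul _ _

lemma integral_integral_inner_sq :
    ∫ x, ∫ y, ⟪x, y⟫ ^ 2 ∂μ ∂μ = ∑ i, ∑ j, (∫ z, z i * z j ∂μ) ^ 2 := by
  simp only [integral_inner_sq hmom]
  rw [integral_finsetSum _ fun i _ =>
    integrable_finsetSum _ fun j _ => (integrable_apply_mul_apply hmom i j).mul_const _]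
  refine Finset.sum_congr rfl fun i _ => ?_
  rw [integral_finsetSum _ fun j _ => (integrable_apply_mul_apply hmom i j).mul_const _]
  exact Finset.sum_congr rfl fun j _ => by rw [integral_mul_const, sq]

end Moments

theorem stmt17_general {N : ℕ} (μ : Measure (EuclideanSpace ℝ (Fin N)))
    (hmom : Integrable (fun y : EuclideanSpace ℝ (Fin N) => ‖y‖ ^ 2) μ)
    (S : Matrix (Fin N) (Fin N) ℝ)
    (hS : ∀ i j, S i j = ∫ x, x i * x j ∂μ)
    (hSherm : S.IsHermitian) :
    ∫ x, ∫ y, ⟪x, y⟫ ^ 2 ∂μ ∂μ = ∑ k, hSherm.eigenvalues k ^ 2 ∧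
    ∫ x, ∫ y, ⟪x, y⟫ ^ 2 ∂μ ∂μ = ∑ i, ∑ j, S i j ^ 2 := by
  have hpot : ∫ x, ∫ y, ⟪x, y⟫ ^ 2 ∂μ ∂μ = ∑ i, ∑ j, S i j ^ 2 := by
    simp only [integral_integral_inner_sq hmom, hS]
  exact ⟨hpot.trans hSherm.sum_eigenvalues_sq_eq_sum_sq.symm, hpot⟩

theorem stmt17 {N : ℕ} (μ : Measure (EuclideanSpace ℝ (Fin N)))
    [IsProbabilityMeasure μ]
    (hmom : Integrable (fun y : EuclideanSpace ℝ (Fin N) => ‖y‖ ^ 2) μ)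
    (S : Matrix (Fin N) (Fin N) ℝ)
    (hS : ∀ i j, S i j = ∫ x, x i * x j ∂μ)
    (hSherm : S.IsHermitian) :
    ∫ x, ∫ y, ⟪x, y⟫ ^ 2 ∂μ ∂μ = ∑ k, hSherm.eigenvalues k ^ 2 ∧
    ∫ x, ∫ y, ⟪x, y⟫ ^ 2 ∂μ ∂μ = ∑ i, ∑ j, S i j ^ 2 :=
  stmt17_general μ hmom S hS hSherm
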